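/- Let b₁,...,bₙ ∈ ℝ^m be an LLL-reduced basis of the lattice L, and let 1 ≤ k ≤ n. Then ‖b₁‖·‖b₂‖⋯‖b_k‖ ≤ 2^{k(n−1)/4} · (det L)^{k/n}. -/

import Mathlib

open scoped BigOperators RealInnerProductSpace

/-- The Gram–Schmidt orthogonalization `b₁*, …, bₙ*` of the vectors `b₁, …, bₙ`:
`bᵢ* = bᵢ - ∑_{j<i} μᵢⱼ bⱼ*`. -/
noncomputable def gso {m n : ℕ} (b : Fin n → EuclideanSpace ℝ (Fin m)) :
    Fin n → EuclideanSpace ℝ (Fin m) :=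
  haveI : WellFoundedLT (Fin n) := inferInstance
  InnerProductSpace.gramSchmidt ℝ b

/-- The Gram–Schmidt coefficient `μᵢⱼ = ⟨bᵢ, bⱼ*⟩ / ⟨bⱼ*, bⱼ*⟩`. -/
noncomputable def mu {m n : ℕ} (b : Fin n → EuclideanSpace ℝ (Fin m)) (i j : Fin n) : ℝ :=
  ⟪b i, gso b j⟫ / ⟪gso b j, gso b j⟫

/-- `b₁, …, bₙ` is LLL-reduced: `|μⱼᵢ| ≤ 1/2` for `i < j`, and the exchange condition
`‖bⱼ* + μ_{j,j-1} b_{j-1}*‖² ≥ (3/4) ‖b_{j-1}*‖²` for consecutive indices `i + 1 = j`. -/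
def LLLReduced {m n : ℕ} (b : Fin n → EuclideanSpace ℝ (Fin m)) : Prop :=
  (∀ i j : Fin n, i < j → |mu b j i| ≤ 1 / 2) ∧
  (∀ i j : Fin n, (i : ℕ) + 1 = (j : ℕ) →
    (3 / 4 : ℝ) * ‖gso b i‖ ^ 2 ≤ ‖gso b j + mu b j i • gso b i‖ ^ 2)

/-- Membership in the lattice generated by `b₁, …, bₙ`: an integer linear combination. -/
def inLattice {m n : ℕ} (b : Fin n → EuclideanSpace ℝ (Fin m))
    (x : EuclideanSpace ℝ (Fin m)) : Prop :=
  ∃ c : Fin n → ℤ, x = ∑ i, (c i : ℝ) • b i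

/-- The determinant of the lattice generated by `d₁, …, d_k`:
`√(det DᵀD)`, i.e. the square root of the Gram determinant. -/
noncomputable def latticeDet {m k : ℕ} (d : Fin k → EuclideanSpace ℝ (Fin m)) : ℝ :=
  Real.sqrt (Matrix.det (Matrix.of fun i j => ⟪d i, d j⟫))

/-! Write `Bᵢ = ‖bᵢ*‖²` (indices from `0`). Size reduction and the Lovász condition give
`Bᵢ ≤ 2 Bᵢ₊₁`, so `cᵢ = 2ⁱ Bᵢ` is nondecreasing, and `‖bᵢ‖² = Bᵢ + ∑_{j<i} μᵢⱼ² Bⱼ ≤ cᵢ`.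
The geometric mean of the first `k` terms of a nondecreasing sequence is at most that of all `n`,
hence `∏_{i<k} ‖bᵢ‖² ≤ (∏_{i<n} cᵢ)^{k/n} = (2^{n(n-1)/2} (det L)²)^{k/n}`, where
`det L = ∏ ‖bᵢ*‖` because the Gram matrix of `b` is `T · diag(Bᵢ) · Tᵀ` with `T` unitriangular. -/

open Finset Matrix InnerProductSpace

theorem Finset.prod_pow_card_le_prod_pow_card {ι R : Type*} [CommMonoidWithZero R] [Preorder R]
    [ZeroLEOneClass R] [PosMulMono R] {s t : Finset ι} {c : ι → R}
    (hc : ∀ i ∈ s, 0 ≤ c i) (hst : ∀ i ∈ s, ∀ j ∈ t, c i ≤ c j) :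
    (∏ i ∈ s, c i) ^ #t ≤ (∏ j ∈ t, c j) ^ #s := by
  calc (∏ i ∈ s, c i) ^ #t = ∏ _j ∈ t, ∏ i ∈ s, c i := (prod_const _).symm
    _ ≤ ∏ j ∈ t, ∏ _i ∈ s, c j :=
      prod_le_prod (fun _ _ => prod_nonneg hc) fun j hj => prod_le_prod hc fun i hi => hst i hi j hj
    _ = (∏ j ∈ t, c j) ^ #s := by simp only [prod_const, prod_pow]

theorem Fin.prod_castLE_pow_le_prod_pow {R : Type*} [CommMonoidWithZero R] [PartialOrder R]
    [ZeroLEOneClass R] [PosMulMono R] {k n : ℕ} (hkn : k ≤ n) {c : Fin n → R}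
    (hc0 : ∀ i, 0 ≤ c i) (hc : Monotone c) :
    (∏ i : Fin k, c (Fin.castLE hkn i)) ^ n ≤ (∏ i, c i) ^ k := by
  classical
  set s := univ.map (Fin.castLEEmb hkn)
  have hs : #s = k := by simp [s]
  have hsc : #sᶜ = n - k := by simp [card_compl, hs]
  have hP : ∏ i : Fin k, c (Fin.castLE hkn i) = ∏ i ∈ s, c i := by simp [s]
  have hle : ∀ i ∈ s, ∀ j ∈ sᶜ, c i ≤ c j := by
    intro i hi j hj
    simp only [s, mem_map, mem_compl, not_exists, mem_univ, true_and] at hi hj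
    obtain ⟨i, rfl⟩ := hi
    have hkj : k ≤ (j : ℕ) := not_lt.1 fun hjk => hj ⟨j, hjk⟩ rfl
    exact hc (Fin.le_def.2 (by simp only [Fin.castLEEmb_apply, Fin.val_castLE]; omega))
  calc (∏ i : Fin k, c (Fin.castLE hkn i)) ^ n
      = (∏ i ∈ s, c i) ^ k * (∏ i ∈ s, c i) ^ #sᶜ := by
        rw [hP, ← pow_add, hsc, Nat.add_sub_cancel' hkn]
    _ ≤ (∏ i ∈ s, c i) ^ k * (∏ i ∈ sᶜ, c i) ^ k := by
        rw [← hs]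
        exact mul_le_mul_of_nonneg_left (prod_pow_card_le_prod_pow_card (fun i _ => hc0 i) hle)
          (pow_nonneg (prod_nonneg fun i _ => hc0 i) _)
    _ = (∏ i, c i) ^ k := by rw [← mul_pow, prod_mul_prod_compl]

theorem Fin.prod_pow_val_eq_rpow (a : ℝ) (n : ℕ) :
    ∏ i : Fin n, a ^ (i : ℕ) = a ^ ((n : ℝ) * (n - 1) / 2) := by
  rw [prod_pow_eq_pow_sum, Fin.sum_univ_eq_sum_range (fun i => i), ← Real.rpow_natCast]
  congr 1
  rcases Nat.eq_zero_or_pos n with rfl | hn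
  · simp
  · have h := congrArg (Nat.cast : ℕ → ℝ) (sum_range_id_mul_two n)
    push_cast [Nat.cast_pred hn] at h
    push_cast
    linarith

section Gram

variable {ι E : Type*} [NormedAddCommGroup E] [InnerProductSpace ℝ E]

theorem Matrix.gram_sum_smul [Fintype ι] (T : Matrix ι ι ℝ) (w : ι → E) :
    gram ℝ (fun i => ∑ j, T i j • w j) = T * gram ℝ w * Tᵀ := by
  ext i i'
  simp only [gram_apply, mul_apply, transpose_apply, sum_inner, inner_sum, real_inner_smul_left,
    real_inner_smul_right, sum_mul]
  exact sum_congr rfl fun j _ => sum_congr rfl fun l _ => by rw [real_inner_comm]; ring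

theorem Matrix.gram_eq_diagonal_of_pairwise_inner_eq_zero [DecidableEq ι] {w : ι → E}
    (hw : Pairwise fun i j => ⟪w i, w j⟫ = 0) : gram ℝ w = diagonal fun i => ‖w i‖ ^ 2 := by
  ext i j
  rcases eq_or_ne i j with rfl | hij
  · simp [gram_apply]
  · simp [gram_apply, hw hij, hij]

end Gram

section GramSchmidt

variable {m n : ℕ} (b : Fin n → EuclideanSpace ℝ (Fin m))

theorem gso_eq_gramSchmidt : gso b = gramSchmidt ℝ b := rfl

theorem inner_gso_eq_zero {i j : Fin n} (h : i ≠ j) : ⟪gso b i, gso b j⟫ = 0 :=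
  gramSchmidt_orthogonal ℝ b h

theorem gso_add_sum_mu_smul_gso (i : Fin n) :
    gso b i + ∑ j ∈ Iio i, mu b i j • gso b j = b i := by
  rw [gramSchmidt_def'' ℝ b i]
  simp only [gso_eq_gramSchmidt, mu, real_inner_comm, real_inner_self_eq_norm_sq]
  rfl

theorem norm_sq_eq_norm_gso_sq_add_sum (i : Fin n) :
    ‖b i‖ ^ 2 = ‖gso b i‖ ^ 2 + ∑ j ∈ Iio i, mu b i j ^ 2 * ‖gso b j‖ ^ 2 := by
  have horth : ⟪gso b i, ∑ j ∈ Iio i, mu b i j • gso b j⟫ = 0 :=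
    (inner_sum _ _ _).trans <| sum_eq_zero fun j hj => by
      rw [real_inner_smul_right, inner_gso_eq_zero b (mem_Iio.1 hj).ne', mul_zero]
  have hpyth :
      ‖∑ j ∈ Iio i, mu b i j • gso b j‖ ^ 2 = ∑ j ∈ Iio i, mu b i j ^ 2 * ‖gso b j‖ ^ 2 := by
    rw [← real_inner_self_eq_norm_sq, sum_inner]
    refine sum_congr rfl fun j hj => ?_
    rw [inner_sum, sum_eq_single_of_mem j hj fun l _ hlj => by
      rw [real_inner_smul_left, real_inner_smul_right, inner_gso_eq_zero b hlj.symm, mul_zero,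
        mul_zero]]
    rw [real_inner_smul_left, real_inner_smul_right, real_inner_self_eq_norm_sq]
    ring
  rw [← gso_add_sum_mu_smul_gso b i, norm_add_sq_real, horth, hpyth]
  ring

noncomputable def muMatrix : Matrix (Fin n) (Fin n) ℝ :=
  of fun i j => if j < i then mu b i j else if i = j then 1 else 0

theorem sum_muMatrix_smul_gso (i : Fin n) : ∑ j, muMatrix b i j • gso b j = b i := by
  have hsplit : ∀ j, muMatrix b i j • gso b j =
      (if j < i then mu b i j • gso b j else 0) + if i = j then gso b j else 0 := by
    intro j
    rcases lt_trichotomy j i with hji | rfl | hij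
    · simp [muMatrix, hji, hji.ne']
    · simp [muMatrix]
    · simp [muMatrix, hij.not_gt, hij.ne]
  rw [sum_congr rfl fun j _ => hsplit j, sum_add_distrib, ← sum_filter, filter_gt_eq_Iio,
    sum_ite_eq, if_pos (mem_univ i), add_comm, gso_add_sum_mu_smul_gso]

theorem det_muMatrix : (muMatrix b).det = 1 := by
  rw [det_of_isLowerTriangular _ fun i j (hij : i < j) => by simp [muMatrix, hij.ne, hij.not_gt]]
  simp [muMatrix]

theorem latticeDet_eq_prod_norm_gso : latticeDet b = ∏ j, ‖gso b j‖ := by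
  have hgram : gram ℝ b = muMatrix b * diagonal (fun j => ‖gso b j‖ ^ 2) * (muMatrix b)ᵀ := by
    rw [← gram_eq_diagonal_of_pairwise_inner_eq_zero fun i j => inner_gso_eq_zero b,
      ← gram_sum_smul]
    simp only [sum_muMatrix_smul_gso]
  rw [latticeDet, ← gram, hgram, det_mul, det_mul, det_transpose, det_muMatrix, det_diagonal,
    one_mul, mul_one, prod_pow]
  exact Real.sqrt_sq (prod_nonneg fun j _ => norm_nonneg _)

namespace LLLReduced

variable {b}

theorem mu_sq_le (hb : LLLReduced b) {i j : Fin n} (hij : i < j) : mu b j i ^ 2 ≤ 1 / 4 := by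
  have := hb.1 i j hij
  nlinarith [abs_nonneg (mu b j i), sq_abs (mu b j i)]

theorem norm_gso_sq_le_two_mul (hb : LLLReduced b) {i j : Fin n} (hij : (i : ℕ) + 1 = j) :
    ‖gso b i‖ ^ 2 ≤ 2 * ‖gso b j‖ ^ 2 := by
  have hlt : i < j := Fin.lt_def.2 (by omega)
  have hpyth :
      ‖gso b j + mu b j i • gso b i‖ ^ 2 = ‖gso b j‖ ^ 2 + mu b j i ^ 2 * ‖gso b i‖ ^ 2 := by
    rw [norm_add_sq_real, real_inner_smul_right, inner_gso_eq_zero b hlt.ne', norm_smul, mul_pow,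
      Real.norm_eq_abs, sq_abs]
    ring
  have hlov := hb.2 i j hij
  rw [hpyth] at hlov
  nlinarith [hb.mu_sq_le hlt, sq_nonneg ‖gso b i‖]

theorem monotone_two_pow_mul_norm_gso_sq (hb : LLLReduced b) :
    Monotone fun i : Fin n => (2 : ℝ) ^ (i : ℕ) * ‖gso b i‖ ^ 2 := by
  cases n with
  | zero => exact fun i => i.elim0
  | succ n =>
    refine Fin.monotone_iff_le_succ.2 fun i => ?_
    have := hb.norm_gso_sq_le_two_mul (i := i.castSucc) (j := i.succ) rfl
    simp only [Fin.val_castSucc, Fin.val_succ, pow_succ]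
    nlinarith [pow_pos (two_pos (α := ℝ)) (i : ℕ)]

theorem norm_sq_le_two_pow_mul_norm_gso_sq (hb : LLLReduced b) (i : Fin n) :
    ‖b i‖ ^ 2 ≤ 2 ^ (i : ℕ) * ‖gso b i‖ ^ 2 := by
  set c := 2 ^ (i : ℕ) * ‖gso b i‖ ^ 2
  have hgso : ∀ j ≤ i, ‖gso b j‖ ^ 2 ≤ c * (1 / 2) ^ (j : ℕ) := fun j hji => by
    rw [_root_.one_div_pow, mul_one_div, le_div_iff₀ (by positivity), mul_comm]
    exact hb.monotone_two_pow_mul_norm_gso_sq hji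
  have hterm : ∀ j ∈ Iio i, mu b i j ^ 2 * ‖gso b j‖ ^ 2 ≤ c / 4 * (1 / 2) ^ (j : ℕ) := by
    intro j hj
    have hji := mem_Iio.1 hj
    calc mu b i j ^ 2 * ‖gso b j‖ ^ 2 ≤ 1 / 4 * (c * (1 / 2) ^ (j : ℕ)) :=
          mul_le_mul (hb.mu_sq_le hji) (hgso j hji.le) (sq_nonneg _) (by norm_num)
      _ = c / 4 * (1 / 2) ^ (j : ℕ) := by ring
  have hgeom : ∑ j ∈ Iio i, (1 / 2 : ℝ) ^ (j : ℕ) = 2 - 2 * (1 / 2) ^ (i : ℕ) := by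
    rw [← Fin.valEmbedding_apply, ← sum_map (Iio i) Fin.valEmbedding fun j => (1 / 2 : ℝ) ^ j,
      Fin.map_valEmbedding_Iio, Nat.Iio_eq_range, geom_sum_eq (by norm_num), Fin.valEmbedding_apply]
    ring
  have hpow : (1 / 2 : ℝ) ^ (i : ℕ) ≤ 1 := pow_le_one₀ (by norm_num) (by norm_num)
  have hc : 0 ≤ c := by positivity
  calc ‖b i‖ ^ 2 ≤ ‖gso b i‖ ^ 2 + ∑ j ∈ Iio i, c / 4 * (1 / 2) ^ (j : ℕ) := by
        rw [norm_sq_eq_norm_gso_sq_add_sum]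
        exact add_le_add le_rfl (sum_le_sum hterm)
    _ ≤ c * (1 / 2) ^ (i : ℕ) + c / 4 * (2 - 2 * (1 / 2) ^ (i : ℕ)) := by
        rw [← mul_sum, hgeom]
        exact add_le_add (hgso i le_rfl) le_rfl
    _ ≤ c := by nlinarith

end LLLReduced

end GramSchmidt

theorem prod_norm_le_det_lattice_general {m n k : ℕ} (hk1 : 1 ≤ k) (hkn : k ≤ n)
    (b : Fin n → EuclideanSpace ℝ (Fin m))
    (hred : LLLReduced b) :
    ∏ i : Fin k, ‖b (Fin.castLE hkn i)‖ ≤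
      2 ^ ((k : ℝ) * ((n : ℝ) - 1) / 4) * latticeDet b ^ ((k : ℝ) / n) := by
  have hn : n ≠ 0 := by omega
  have hD : 0 ≤ latticeDet b := Real.sqrt_nonneg _
  set c : Fin n → ℝ := fun i => 2 ^ (i : ℕ) * ‖gso b i‖ ^ 2
  have hprod : ∏ i, c i = 2 ^ ((n : ℝ) * (n - 1) / 2) * latticeDet b ^ 2 := by
    rw [prod_mul_distrib, Fin.prod_pow_val_eq_rpow, latticeDet_eq_prod_norm_gso, prod_pow]
  have hsq : (∏ i : Fin k, ‖b (Fin.castLE hkn i)‖) ^ 2 ≤ ∏ i : Fin k, c (Fin.castLE hkn i) := by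
    rw [← prod_pow]
    exact prod_le_prod (fun _ _ => sq_nonneg _) fun i _ =>
      hred.norm_sq_le_two_pow_mul_norm_gso_sq _
  refine le_of_pow_le_pow_left₀ (n := 2 * n) (by omega) (by positivity) ?_
  calc (∏ i : Fin k, ‖b (Fin.castLE hkn i)‖) ^ (2 * n)
      = ((∏ i : Fin k, ‖b (Fin.castLE hkn i)‖) ^ 2) ^ n := pow_mul _ _ _
    _ ≤ (∏ i : Fin k, c (Fin.castLE hkn i)) ^ n := pow_le_pow_left₀ (sq_nonneg _) hsq n
    _ ≤ (∏ i, c i) ^ k :=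
      Fin.prod_castLE_pow_le_prod_pow hkn (fun i => by positivity)
        hred.monotone_two_pow_mul_norm_gso_sq
    _ = _ := by
      rw [hprod, mul_pow, mul_pow, ← Real.rpow_natCast (2 ^ _) k, ← Real.rpow_mul zero_le_two,
        ← Real.rpow_natCast (2 ^ _) (2 * n), ← Real.rpow_mul zero_le_two,
        ← Real.rpow_natCast (latticeDet b ^ _) (2 * n), ← Real.rpow_mul hD, ← pow_mul,
        ← Real.rpow_natCast (latticeDet b) (2 * k)]
      congr 2
      · push_cast
        ring
      · push_cast
        field_simp

theorem prod_norm_le_det_lattice {m n k : ℕ} (hk1 : 1 ≤ k) (hkn : k ≤ n)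
    (b : Fin n → EuclideanSpace ℝ (Fin m))
    (hb : LinearIndependent ℝ b) (hred : LLLReduced b) :
    ∏ i : Fin k, ‖b (Fin.castLE hkn i)‖ ≤
      2 ^ ((k : ℝ) * ((n : ℝ) - 1) / 4) * latticeDet b ^ ((k : ℝ) / n) :=
  prod_norm_le_det_lattice_general hk1 hkn b hred
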